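/- arXiv:2404.11003 — 3 statements merged into one kernel-verified Lean document; each statement's English description precedes it below -/
import Mathlib

section
/- Let α, β, γ be finite types, let p be a probability mass function on α, and let f : α → β and g : α → γ be maps (two deterministic augmentations of the data). Let r be the pushforward pmf on β × γ of p under x ↦ (f(x), g(x)), i.e., r(y,z) = ∑_{x : f(x) = y and g(x) = z} p(x), the joint law of the pair of augmented views (𝒳^{(1)}, 𝒳^{(2)}). Then the mutual information of r is at most the entropy of p: I(r) ≤ H(p). (This is the inequality H(𝒳) = I(𝒳;𝒳) ≥ I(𝒳^{(1)};𝒳^{(2)}) in Eq. (5), the content of the paper's Lemma 2: the mutual information between two augmented views is a lower bound on the entropy of the dataset.) -/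
open Finset

/-- The content of the paper's Lemma 2 (Eq. (5)): the mutual information between two
deterministic augmented views `f` and `g` of the data is a lower bound on the entropy of
the dataset, `I(𝒳^{(1)};𝒳^{(2)}) ≤ H(𝒳)`. -/
theorem infomatch_stmt7
    {α β γ : Type*} [Fintype α] [Fintype β] [Fintype γ]
    [DecidableEq β] [DecidableEq γ]
    (p : α → ℝ) (hp0 : ∀ x, 0 ≤ p x) (hp1 : ∑ x, p x = 1)
    (f : α → β) (g : α → γ)
    (r : β × γ → ℝ)
    (hr : ∀ y z, r (y, z)
      = ∑ x ∈ Finset.univ.filter (fun x => f x = y ∧ g x = z), p x)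
    (r₁ : β → ℝ) (hr₁ : ∀ y, r₁ y = ∑ z, r (y, z))
    (r₂ : γ → ℝ) (hr₂ : ∀ z, r₂ z = ∑ y, r (y, z)) :
    ∑ a ∈ Finset.univ.filter (fun a : β × γ => 0 < r a),
        r a * Real.log (r a / (r₁ a.1 * r₂ a.2))
    ≤ - ∑ x ∈ Finset.univ.filter (fun x => 0 < p x), p x * Real.log (p x) := by
  classical
  have hrnn : ∀ a : β × γ, 0 ≤ r a := by
    rintro ⟨y, z⟩
    rw [hr]
    exact Finset.sum_nonneg fun x _ => hp0 x
  have hr_le_r1 : ∀ a : β × γ, r a ≤ r₁ a.1 := by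
    rintro ⟨y, z⟩
    rw [hr₁]
    exact Finset.single_le_sum (f := fun z => r (y, z)) (fun z _ => hrnn (y, z))
      (Finset.mem_univ z)
  have hr2_eq : ∀ z, r₂ z = ∑ x ∈ Finset.univ.filter (fun x => g x = z), p x := by
    intro z
    rw [hr₂]
    have : ∀ y, r (y, z)
        = ∑ x ∈ (Finset.univ.filter (fun x => g x = z)).filter (fun x => f x = y), p x := by
      intro y
      rw [hr, Finset.filter_filter]
      congr 1
      ext x
      simp [and_comm]
    simp_rw [this]
    exact Finset.sum_fiberwise (Finset.univ.filter (fun x => g x = z)) f p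
  have hr_le_r2 : ∀ a : β × γ, r a ≤ r₂ a.2 := by
    rintro ⟨y, z⟩
    rw [hr₂]
    exact Finset.single_le_sum (f := fun y => r (y, z)) (fun y _ => hrnn (y, z))
      (Finset.mem_univ y)
  have hp_le_r2 : ∀ x, p x ≤ r₂ (g x) := by
    intro x
    rw [hr2_eq]
    exact Finset.single_le_sum (fun x _ => hp0 x) (by simp)
  -- Step 1 : bound each term by -r a * log (r₂ a.2)
  have step1 : ∑ a ∈ Finset.univ.filter (fun a : β × γ => 0 < r a),
        r a * Real.log (r a / (r₁ a.1 * r₂ a.2))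
      ≤ ∑ a ∈ Finset.univ.filter (fun a : β × γ => 0 < r a),
        -(r a * Real.log (r₂ a.2)) := by
    apply Finset.sum_le_sum
    intro a ha
    have hra : 0 < r a := (Finset.mem_filter.mp ha).2
    have hr1pos : 0 < r₁ a.1 := lt_of_lt_of_le hra (hr_le_r1 a)
    have hr2pos : 0 < r₂ a.2 := lt_of_lt_of_le hra (hr_le_r2 a)
    have hlog : Real.log (r a / (r₁ a.1 * r₂ a.2)) ≤ Real.log (r₂ a.2)⁻¹ := by
      apply Real.log_le_log (by positivity)
      rw [div_le_iff₀ (by positivity)]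
      rw [inv_mul_eq_div, le_div_iff₀ hr2pos]
      nlinarith [hr_le_r1 a]
    calc r a * Real.log (r a / (r₁ a.1 * r₂ a.2))
        ≤ r a * Real.log (r₂ a.2)⁻¹ := mul_le_mul_of_nonneg_left hlog hra.le
      _ = -(r a * Real.log (r₂ a.2)) := by rw [Real.log_inv]; ring
  -- extend to the full sum
  have step2 : ∑ a ∈ Finset.univ.filter (fun a : β × γ => 0 < r a),
        -(r a * Real.log (r₂ a.2))
      = -∑ a : β × γ, r a * Real.log (r₂ a.2) := by
    rw [← Finset.sum_neg_distrib]
    apply Finset.sum_subset (Finset.filter_subset _ _)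
    intro a _ ha
    have : r a = 0 := le_antisymm (by simpa using ha) (hrnn a)
    simp [this]
  -- rewrite the full sum as a sum over x
  have step3 : ∑ a : β × γ, r a * Real.log (r₂ a.2)
      = ∑ x, p x * Real.log (r₂ (g x)) := by
    rw [Fintype.sum_prod_type]
    rw [Finset.sum_comm]
    have : ∀ z : γ, ∑ y, r (y, z) * Real.log (r₂ z)
        = ∑ x ∈ Finset.univ.filter (fun x => g x = z), p x * Real.log (r₂ (g x)) := by
      intro z
      rw [← Finset.sum_mul, ← hr₂, hr2_eq, Finset.sum_mul]
      apply Finset.sum_congr rfl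
      intro x hx
      rw [(Finset.mem_filter.mp hx).2, hr2_eq]
    simp_rw [this]
    exact Finset.sum_fiberwise Finset.univ g (fun x => p x * Real.log (r₂ (g x)))
  -- final comparison with entropy
  have step4 : ∑ x ∈ Finset.univ.filter (fun x => 0 < p x), p x * Real.log (p x)
      ≤ ∑ x, p x * Real.log (r₂ (g x)) := by
    have hfull : ∑ x ∈ Finset.univ.filter (fun x => 0 < p x), p x * Real.log (p x)
        = ∑ x, p x * Real.log (p x) := by
      apply Finset.sum_subset (Finset.filter_subset _ _)
      intro x _ hx
      have : p x = 0 := le_antisymm (by simpa using hx) (hp0 x)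
      simp [this]
    rw [hfull]
    apply Finset.sum_le_sum
    intro x _
    rcases eq_or_lt_of_le (hp0 x) with h | h
    · simp [← h]
    · exact mul_le_mul_of_nonneg_left (Real.log_le_log h (hp_le_r2 x)) h.le
  linarith [step1, step2, step3, step4]
end

section
/- Let α be a finite type, let p and q be probability mass functions on α, and let d : α → ℝ be any function with 0 < d(x) < 1 for all x (a discriminator). Then ∑_x p(x) · ln d(x) + ∑_x q(x) · ln (1 − d(x)) ≤ 2 · JSD(p,q) − ln 4, where JSD(p,q) = (1/2) · KL(p‖m) + (1/2) · KL(q‖m) with m = (p+q)/2. (Sharp variational lower bound on the Jensen–Shannon divergence via discriminators, the bound the paper invokes in Eq. (9) to turn mutual-information maximization into a contrastive objective.) -/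
open Finset

lemma infomatch_aux {α : Type*} [Fintype α] (w c : α → ℝ)
    (hw0 : ∀ x, 0 ≤ w x) (hw1 : ∑ x, w x = 1)
    (hc0 : ∀ x, 0 ≤ c x) (hcpos : ∀ x, 0 < w x → 0 < c x) :
    ∑ x ∈ Finset.univ.filter (fun x => 0 < w x), w x * Real.log (c x / w x)
      ≤ ∑ x, c x - 1 := by
  have h1 : ∑ x ∈ Finset.univ.filter (fun x => 0 < w x), w x * Real.log (c x / w x)
      ≤ ∑ x ∈ Finset.univ.filter (fun x => 0 < w x), (c x - w x) := by
    apply Finset.sum_le_sum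
    intro x hx
    have hwx : 0 < w x := (Finset.mem_filter.mp hx).2
    have hcx := hcpos x hwx
    have hpos : 0 < c x / w x := div_pos hcx hwx
    have hlog := Real.log_le_sub_one_of_pos hpos
    have : w x * Real.log (c x / w x) ≤ w x * (c x / w x - 1) := by nlinarith
    calc w x * Real.log (c x / w x) ≤ w x * (c x / w x - 1) := this
      _ = c x - w x := by field_simp
  have h2 : ∑ x ∈ Finset.univ.filter (fun x => 0 < w x), w x = 1 := by
    rw [← hw1]
    apply Finset.sum_filter_of_ne
    intro x _ hne
    exact lt_of_le_of_ne (hw0 x) (Ne.symm hne)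
  have h3 : ∑ x ∈ Finset.univ.filter (fun x => 0 < w x), c x ≤ ∑ x, c x :=
    Finset.sum_le_sum_of_subset_of_nonneg (Finset.filter_subset _ _) (fun x _ _ => hc0 x)
  rw [Finset.sum_sub_distrib, h2] at h1
  linarith

/-- Sharp variational lower bound on the Jensen–Shannon divergence via discriminators
(the bound the paper invokes in Eq. (9)): for any discriminator `d` with `0 < d(x) < 1`,
`∑ p·ln d + ∑ q·ln(1−d) ≤ 2·JSD(p,q) − ln 4`. -/
theorem infomatch_stmt8
    {α : Type*} [Fintype α]
    (p q : α → ℝ)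
    (hp0 : ∀ x, 0 ≤ p x) (hp1 : ∑ x, p x = 1)
    (hq0 : ∀ x, 0 ≤ q x) (hq1 : ∑ x, q x = 1)
    (d : α → ℝ) (hd : ∀ x, 0 < d x ∧ d x < 1)
    (m : α → ℝ) (hm : ∀ x, m x = (p x + q x) / 2)
    (JSD : ℝ)
    (hJSD : JSD
      = (1 / 2) * ∑ x ∈ Finset.univ.filter (fun x => 0 < p x),
          p x * Real.log (p x / m x)
      + (1 / 2) * ∑ x ∈ Finset.univ.filter (fun x => 0 < q x),
          q x * Real.log (q x / m x)) :
    ∑ x, p x * Real.log (d x) + ∑ x, q x * Real.log (1 - d x)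
    ≤ 2 * JSD - Real.log 4 := by
  have hm0 : ∀ x, 0 ≤ m x := by
    intro x; rw [hm x]; have := hp0 x; have := hq0 x; linarith
  -- restrict full sums to supports
  have hsupp : ∀ (w : α → ℝ) (f : α → ℝ), (∀ x, 0 ≤ w x) →
      ∑ x, w x * f x = ∑ x ∈ Finset.univ.filter (fun x => 0 < w x), w x * f x := by
    intro w f hw0
    symm
    apply Finset.sum_filter_of_ne
    intro x _ hne
    rcases lt_or_eq_of_le (hw0 x) with h | h
    · exact h
    · exfalso; apply hne; rw [← h]; ring
  have hwsupp : ∀ (w : α → ℝ), (∀ x, 0 ≤ w x) → ∑ x, w x = 1 →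
      ∑ x ∈ Finset.univ.filter (fun x => 0 < w x), w x = 1 := by
    intro w hw0 hw1
    rw [← hw1]
    apply Finset.sum_filter_of_ne
    intro x _ hne
    exact lt_of_le_of_ne (hw0 x) (Ne.symm hne)
  -- key bounds
  have keyp := infomatch_aux p (fun x => 2 * d x * m x) hp0 hp1
    (fun x => by have := (hd x).1; have := hm0 x; positivity)
    (fun x hx => by
      have hdx := (hd x).1
      have hmx : 0 < m x := by rw [hm x]; have := hq0 x; linarith
      positivity)
  have keyq := infomatch_aux q (fun x => 2 * (1 - d x) * m x) hq0 hq1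
    (fun x => by have := (hd x).2; have := hm0 x; show (0:ℝ) ≤ 2 * (1 - d x) * m x; nlinarith)
    (fun x hx => by
      have hdx := (hd x).2
      have hmx : 0 < m x := by rw [hm x]; have := hp0 x; linarith
      show (0:ℝ) < 2 * (1 - d x) * m x; nlinarith)
  -- log identities on supports
  have hidp : ∀ x ∈ Finset.univ.filter (fun x => 0 < p x),
      p x * Real.log (2 * d x * m x / p x)
        = p x * Real.log (d x) - p x * Real.log (p x / m x) + p x * Real.log 2 := by
    intro x hx
    have hpx : 0 < p x := (Finset.mem_filter.mp hx).2
    have hdx := (hd x).1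
    have hmx : 0 < m x := by rw [hm x]; have := hq0 x; linarith
    rw [Real.log_div (by positivity) hpx.ne', Real.log_mul (by positivity) hmx.ne',
      Real.log_mul two_ne_zero hdx.ne', Real.log_div hpx.ne' hmx.ne']
    ring
  have hidq : ∀ x ∈ Finset.univ.filter (fun x => 0 < q x),
      q x * Real.log (2 * (1 - d x) * m x / q x)
        = q x * Real.log (1 - d x) - q x * Real.log (q x / m x) + q x * Real.log 2 := by
    intro x hx
    have hqx : 0 < q x := (Finset.mem_filter.mp hx).2
    have hdx := (hd x).2
    have hd1 : 0 < 1 - d x := by linarith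
    have hmx : 0 < m x := by rw [hm x]; have := hp0 x; linarith
    rw [Real.log_div (by positivity) hqx.ne', Real.log_mul (by positivity) hmx.ne',
      Real.log_mul two_ne_zero hd1.ne', Real.log_div hqx.ne' hmx.ne']
    ring
  rw [Finset.sum_congr rfl hidp] at keyp
  rw [Finset.sum_congr rfl hidq] at keyq
  simp only [Finset.sum_add_distrib, Finset.sum_sub_distrib, ← Finset.sum_mul] at keyp keyq
  rw [hwsupp p hp0 hp1] at keyp
  rw [hwsupp q hq0 hq1] at keyq
  -- total mass identity
  have hAB : ∑ x, 2 * d x * m x + ∑ x, 2 * (1 - d x) * m x = 2 := by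
    rw [← Finset.sum_add_distrib]
    have : ∀ x, 2 * d x * m x + 2 * (1 - d x) * m x = p x + q x := by
      intro x; rw [hm x]; ring
    rw [Finset.sum_congr rfl (fun x _ => this x), Finset.sum_add_distrib, hp1, hq1]; norm_num
  have hlog4 : Real.log 4 = 2 * Real.log 2 := by
    rw [show (4:ℝ) = 2 ^ 2 by norm_num, Real.log_pow]; push_cast; ring
  rw [hsupp p (fun x => Real.log (d x)) hp0, hsupp q (fun x => Real.log (1 - d x)) hq0,
    hJSD, hlog4]
  linarith
end

section
/- Let α be a finite type and let p and q be probability mass functions on α with p(x) + q(x) > 0 for all x. Define the optimal discriminator d*(x) = p(x) / (p(x) + q(x)). Then, restricting all sums to the support of p (respectively q), one has ∑_{x : p(x) > 0} p(x) · ln d*(x) + ∑_{x : q(x) > 0} q(x) · ln (1 − d*(x)) = 2 · JSD(p,q) − ln 4, where JSD(p,q) = (1/2) · KL(p‖m) + (1/2) · KL(q‖m) with m = (p+q)/2. (Equality case of the variational bound on the Jensen–Shannon divergence: the discriminator objective attains its supremum 2·JSD − ln 4 at d*.) -/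
open Finset

/-! Since `m = (p + q) / 2`, we have `d* = (p / m) / 2` and `1 - d* = (q / m) / 2`, so each
term of the objective is the corresponding term of the divergence minus `log 2` times its
weight; the weights of either support sum to `1`, which accounts for `log 4 = 2 log 2`. -/

theorem Finset.sum_filter_pos_eq_sum {ι : Type*} (s : Finset ι) {f : ι → ℝ}
    (hf : ∀ x ∈ s, 0 ≤ f x) : ∑ x ∈ s.filter (fun x => 0 < f x), f x = ∑ x ∈ s, f x :=
  sum_filter_of_ne fun x hx hne => (hf x hx).lt_of_ne' hne

theorem Real.log_div_half_eq {a c : ℝ} (ha : a ≠ 0) (hc : c ≠ 0) :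
    Real.log (a / (c / 2)) = Real.log (a / c) + Real.log 2 := by
  rw [div_div_eq_mul_div, mul_div_right_comm,
    Real.log_mul (div_ne_zero ha hc) two_ne_zero]

theorem Finset.sum_mul_log_div_half_eq {ι : Type*} (s : Finset ι) {w c : ι → ℝ}
    (hw : ∀ x ∈ s, w x ≠ 0) (hc : ∀ x ∈ s, c x ≠ 0) :
    ∑ x ∈ s, w x * Real.log (w x / (c x / 2))
      = ∑ x ∈ s, w x * Real.log (w x / c x) + (∑ x ∈ s, w x) * Real.log 2 := by
  rw [sum_mul, ← sum_add_distrib]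
  refine sum_congr rfl fun x hx => ?_
  rw [Real.log_div_half_eq (hw x hx) (hc x hx), mul_add]

/-- Equality case of the variational bound on the Jensen–Shannon divergence: the
discriminator objective attains its supremum `2·JSD(p,q) − ln 4` at the optimal
discriminator `d*(x) = p(x)/(p(x)+q(x))`. -/
theorem infomatch_stmt9
    {α : Type*} [Fintype α]
    (p q : α → ℝ)
    (hp0 : ∀ x, 0 ≤ p x) (hp1 : ∑ x, p x = 1)
    (hq0 : ∀ x, 0 ≤ q x) (hq1 : ∑ x, q x = 1)
    (hpq : ∀ x, 0 < p x + q x)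
    (dstar : α → ℝ) (hdstar : ∀ x, dstar x = p x / (p x + q x))
    (m : α → ℝ) (hm : ∀ x, m x = (p x + q x) / 2)
    (JSD : ℝ)
    (hJSD : JSD
      = (1 / 2) * ∑ x ∈ Finset.univ.filter (fun x => 0 < p x),
          p x * Real.log (p x / m x)
      + (1 / 2) * ∑ x ∈ Finset.univ.filter (fun x => 0 < q x),
          q x * Real.log (q x / m x)) :
    ∑ x ∈ Finset.univ.filter (fun x => 0 < p x), p x * Real.log (dstar x)
    + ∑ x ∈ Finset.univ.filter (fun x => 0 < q x), q x * Real.log (1 - dstar x)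
    = 2 * JSD - Real.log 4 := by
  have hdstar' : ∀ x, 1 - dstar x = q x / (p x + q x) := fun x => by
    rw [hdstar, one_sub_div (hpq x).ne', add_sub_cancel_left]
  have hobjective :
      ∑ x ∈ univ.filter (fun x => 0 < p x), p x * Real.log (dstar x)
        + ∑ x ∈ univ.filter (fun x => 0 < q x), q x * Real.log (1 - dstar x)
      = ∑ x ∈ univ.filter (fun x => 0 < p x), p x * Real.log (p x / (p x + q x))
        + ∑ x ∈ univ.filter (fun x => 0 < q x), q x * Real.log (q x / (p x + q x)) := by
    congr 1 <;> refine sum_congr rfl fun x _ => ?_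
    · rw [hdstar]
    · rw [hdstar']
  have hpos : ∀ (f : α → ℝ), ∀ x ∈ univ.filter (fun x => 0 < f x), f x ≠ 0 :=
    fun f x hx => (mem_filter.1 hx).2.ne'
  have hpq_ne : ∀ (f : α → ℝ), ∀ x ∈ univ.filter (fun x => 0 < f x), p x + q x ≠ 0 :=
    fun _ x _ => (hpq x).ne'
  rw [hobjective, hJSD]
  simp only [hm, sum_mul_log_div_half_eq _ (hpos p) (hpq_ne p),
    sum_mul_log_div_half_eq _ (hpos q) (hpq_ne q),
    sum_filter_pos_eq_sum _ fun x _ => hp0 x, sum_filter_pos_eq_sum _ fun x _ => hq0 x,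
    hp1, hq1, Real.log_four_eq]
  ring
end
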